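/- For the complete B-ary tree of depth L, the number of maximal covered nodes of any lexicographic leaf interval T satisfies the bound 2B·⌈log_B(|T|)⌉ when |T| ≥ 2, and equals 1 when T is the full leaf-set of a single node. -/

import Mathlib

/-- A node of the complete `B`-ary tree of depth `L`: a node at depth `d ≤ L`
is identified by its index `idx < B ^ d` among the depth-`d` nodes in
left-to-right (lexicographic) order.  A leaf is a node of depth `L`. -/
structure TreeNode (B L : ℕ) where
  depth : ℕ
  idx : ℕ
  depth_le : depth ≤ L
  idx_lt : idx < B ^ depth

namespace TreeNode

instance {B L : ℕ} : DecidableEq (TreeNode B L) := fun u v =>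
  decidable_of_iff (u.depth = v.depth ∧ u.idx = v.idx) (by
    cases u; cases v; simp [TreeNode.mk.injEq])

/-- The set of leaves (identified with numbers `< B ^ L` in lexicographic
order) descending from a node. -/
def leafSet {B L : ℕ} (u : TreeNode B L) : Set ℕ :=
  {x | x < B ^ L ∧ x / B ^ (L - u.depth) = u.idx}

/-- `u` is a (weak) prefix/ancestor of `v`. -/
def IsPrefix {B L : ℕ} (u v : TreeNode B L) : Prop :=
  u.depth ≤ v.depth ∧ v.idx / B ^ (v.depth - u.depth) = u.idx

/-- `u` is a strict prefix / strict ancestor of `v`. -/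
def IsStrictPrefix {B L : ℕ} (u v : TreeNode B L) : Prop :=
  u.depth < v.depth ∧ v.idx / B ^ (v.depth - u.depth) = u.idx

/-- A node is covered by a leaf set `T` if all its leaf-descendants lie in `T`. -/
def covered {B L : ℕ} (T : Set ℕ) (u : TreeNode B L) : Prop :=
  u.leafSet ⊆ T

/-- A node is subsumed by `T` if some strict ancestor of it is covered by `T`. -/
def subsumed {B L : ℕ} (T : Set ℕ) (u : TreeNode B L) : Prop :=
  ∃ v : TreeNode B L, v.IsStrictPrefix u ∧ v.covered T

/-- Maximal covered node: covered, with no covered strict ancestor. -/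
def maximalCovered {B L : ℕ} (T : Set ℕ) (u : TreeNode B L) : Prop :=
  u.covered T ∧ ¬ u.subsumed T

end TreeNode

/-!
A maximal covered node `u` of `[a, b)` other than the root has an uncovered parent, whose block
of leaves sticks out of `[a, b)` on the left or on the right. If `u` has height `j`, this puts `u`
among the `B - 1` blocks of size `B ^ j` starting at `⌈a / B ^ j⌉` or among the `B - 1` blocks
ending at `⌊b / B ^ j⌋`. A covered block has size at most `b - a`, so only heights
`j ≤ ⌈log_B (b - a)⌉` occur, and at the top height the block must be `[a, b)` itself: at most
`2 (B - 1) ⌈log_B (b - a)⌉ + 1` nodes in all.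
-/

namespace TreeNode

variable {B L : ℕ}

def height (u : TreeNode B L) : ℕ := L - u.depth

theorem ext {u v : TreeNode B L} (hd : u.depth = v.depth) (hi : u.idx = v.idx) : u = v := by
  cases u; cases v; simp_all

theorem injective_height_idx : Function.Injective fun u : TreeNode B L => (u.height, u.idx) := by
  intro u v h
  simp only [height, Prod.mk.injEq] at h
  exact ext (by have := u.depth_le; have := v.depth_le; omega) h.2

theorem pow_height_mul_pow_depth (u : TreeNode B L) : B ^ u.height * B ^ u.depth = B ^ L := by
  rw [← pow_add, height, Nat.sub_add_cancel u.depth_le]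

theorem leafSet_eq_Ico (hB : 0 < B) (u : TreeNode B L) :
    u.leafSet = Set.Ico (u.idx * B ^ u.height) ((u.idx + 1) * B ^ u.height) := by
  have hm : 0 < B ^ u.height := pow_pos hB _
  ext x
  change x < B ^ L ∧ x / B ^ u.height = u.idx ↔ _
  rw [Set.mem_Ico, Nat.div_eq_iff hm]
  constructor
  · rintro ⟨-, hlo, hhi⟩
    exact ⟨hlo, by rw [add_one_mul]; omega⟩
  · rintro ⟨hlo, hhi⟩
    have hleaf : (u.idx + 1) * B ^ u.height ≤ B ^ L :=
      calc (u.idx + 1) * B ^ u.height ≤ B ^ u.depth * B ^ u.height :=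
            Nat.mul_le_mul_right _ u.idx_lt
        _ = B ^ L := by rw [mul_comm, pow_height_mul_pow_depth]
    rw [add_one_mul] at hhi hleaf
    exact ⟨by omega, hlo, by omega⟩

theorem covered_Ico_iff (hB : 0 < B) (u : TreeNode B L) {a b : ℕ} :
    u.covered (Set.Ico a b) ↔ a ≤ u.idx * B ^ u.height ∧ (u.idx + 1) * B ^ u.height ≤ b := by
  rw [covered, leafSet_eq_Ico hB,
    Set.Ico_subset_Ico_iff (Nat.mul_lt_mul_of_pos_right (Nat.lt_add_one _) (pow_pos hB _))]

theorem isPrefix_of_leafSet_subset (hB : 1 < B) {u v : TreeNode B L}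
    (h : v.leafSet ⊆ u.leafSet) : u.IsPrefix v := by
  have hB0 : 0 < B := by omega
  have hm : 0 < B ^ v.height := pow_pos hB0 _
  rw [leafSet_eq_Ico hB0, leafSet_eq_Ico hB0,
    Set.Ico_subset_Ico_iff (Nat.mul_lt_mul_of_pos_right (Nat.lt_add_one _) hm)] at h
  obtain ⟨hlo, hhi⟩ := h
  have hdepth : u.depth ≤ v.depth := by
    have hpow : B ^ v.height ≤ B ^ u.height := by rw [add_one_mul, add_one_mul] at hhi; omega
    have hheight := (Nat.pow_le_pow_iff_right hB).1 hpow
    have := u.depth_le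
    unfold height at hheight
    omega
  have hsplit : B ^ u.height = B ^ (v.depth - u.depth) * B ^ v.height := by
    rw [← pow_add]; unfold height; have := v.depth_le; congr 1; omega
  rw [hsplit, ← mul_assoc] at hlo hhi
  refine ⟨hdepth, Nat.div_eq_of_lt_le (Nat.le_of_mul_le_mul_right hlo hm) ?_⟩
  rw [← Nat.add_one_le_iff]
  exact Nat.le_of_mul_le_mul_right (by linarith) hm

theorem maximalCovered_leafSet_iff (hB : 1 < B) {u w : TreeNode B L} :
    u.maximalCovered w.leafSet ↔ u = w := by
  constructor
  · rintro ⟨hcov, hmax⟩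
    obtain ⟨hdepth, hidx⟩ := isPrefix_of_leafSet_subset hB hcov
    rcases hdepth.lt_or_eq with hlt | heq
    · exact absurd ⟨w, ⟨hlt, hidx⟩, subset_rfl⟩ hmax
    · exact ext heq.symm (by simpa [heq] using hidx)
  · rintro rfl
    refine ⟨subset_rfl, fun ⟨v, hvu, hcov⟩ => ?_⟩
    exact absurd hvu.1 (not_lt.2 (isPrefix_of_leafSet_subset hB hcov).1)

theorem exists_parent (u : TreeNode B L) (hu : 0 < u.depth) :
    ∃ p : TreeNode B L, p.IsStrictPrefix u ∧ p.height = u.height + 1 ∧ p.idx = u.idx / B := by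
  obtain ⟨d, hd⟩ : ∃ d, u.depth = d + 1 := ⟨u.depth - 1, by omega⟩
  have hidx := u.idx_lt
  rw [hd, pow_succ] at hidx
  have hB : 0 < B := Nat.pos_of_ne_zero fun h => by simp [h] at hidx
  refine ⟨⟨d, u.idx / B, by have := u.depth_le; omega, (Nat.div_lt_iff_lt_mul hB).2 hidx⟩,
    ⟨by simp [hd], by simp [hd]⟩, by simp only [height, hd]; have := u.depth_le; omega, rfl⟩

/-- The indices at scale `m` (blocks `[i * m, (i + 1) * m)`) that can carry a maximal covered
block of `[a, b)`: the `B - 1` blocks starting at the left end and those ending at the right end. -/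
def fringe (B a b m : ℕ) : Finset ℕ :=
  Finset.Ico (a ⌈/⌉ m) (a ⌈/⌉ m + (B - 1)) ∪ Finset.Ico (b / m + 1 - B) (b / m)

theorem card_fringe_le (B a b m : ℕ) : (fringe B a b m).card ≤ 2 * (B - 1) := by
  refine (Finset.card_union_le _ _).trans ?_
  simp only [Nat.card_Ico]
  omega

theorem mem_fringe_of_parent_start_lt {a b m i : ℕ} (hB : 0 < B) (hm : 0 < m)
    (ha : a ≤ i * m) (hparent : i / B * (m * B) < a) : i ∈ fringe B a b m := by
  have hle : a ⌈/⌉ m ≤ i := (ceilDiv_le_iff_le_mul hm).2 (by linarith)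
  have hlt : i / B * B < a ⌈/⌉ m :=
    lt_of_not_ge fun h => by
      have := (ceilDiv_le_iff_le_mul hm).1 h
      nlinarith
  have := Nat.lt_div_mul_add (a := i) hB
  exact Finset.mem_union_left _ (Finset.mem_Ico.2 ⟨hle, by omega⟩)

theorem mem_fringe_of_lt_parent_end {a b m i : ℕ} (hm : 0 < m)
    (hb : (i + 1) * m ≤ b) (hparent : b < (i / B + 1) * (m * B)) : i ∈ fringe B a b m := by
  have hlt : i < b / m := (Nat.le_div_iff_mul_le hm).2 hb
  have hle : b / m < i / B * B + B :=
    (Nat.div_lt_iff_lt_mul hm).2 (by linarith)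
  have := Nat.div_mul_le_self i B
  exact Finset.mem_union_right _ (Finset.mem_Ico.2 ⟨by omega, hlt⟩)

theorem idx_mem_fringe_of_maximalCovered (hB : 1 < B) {a b : ℕ} {u : TreeNode B L}
    (hu : u.maximalCovered (Set.Ico a b)) : u.idx ∈ fringe B a b (B ^ u.height) := by
  have hB0 : 0 < B := by omega
  have hm : 0 < B ^ u.height := pow_pos hB0 _
  obtain ⟨hcov, hmax⟩ := hu
  obtain ⟨ha, hb⟩ := (covered_Ico_iff hB0 u).1 hcov
  rcases Nat.eq_zero_or_pos u.depth with hroot | hdepth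
  · have hidx : u.idx = 0 := by simpa [hroot] using u.idx_lt
    rw [hidx, zero_mul, Nat.le_zero] at ha
    refine Finset.mem_union_left _ (Finset.mem_Ico.2 ?_)
    simp only [ha, hidx, zero_ceilDiv]
    omega
  · obtain ⟨p, hpu, hheight, hidx⟩ := u.exists_parent hdepth
    have hpcov : ¬ p.covered (Set.Ico a b) := fun h => hmax ⟨p, hpu, h⟩
    rw [covered_Ico_iff hB0, hheight, hidx, pow_succ, not_and_or, not_le, not_le] at hpcov
    rcases hpcov with hleft | hright
    · exact mem_fringe_of_parent_start_lt hB0 hm ha hleft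
    · exact mem_fringe_of_lt_parent_end hm hb hright

theorem pow_height_le_of_covered (hB : 0 < B) {a b : ℕ} {u : TreeNode B L}
    (hu : u.covered (Set.Ico a b)) : B ^ u.height ≤ b - a := by
  obtain ⟨ha, hb⟩ := (covered_Ico_iff hB u).1 hu
  rw [add_one_mul] at hb
  omega

theorem idx_eq_div_of_covered (hB : 0 < B) {a b : ℕ} {u : TreeNode B L}
    (hu : u.covered (Set.Ico a b)) (hn : b - a ≤ B ^ u.height) : u.idx = a / B ^ u.height := by
  obtain ⟨ha, hb⟩ := (covered_Ico_iff hB u).1 hu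
  rw [add_one_mul] at hb
  rw [show a = u.idx * B ^ u.height by omega, Nat.mul_div_cancel _ (pow_pos hB _)]

/-- `(j, i)` stands for the node of height `j` and index `i`. -/
def candidates (B a b : ℕ) : Finset (ℕ × ℕ) :=
  insert (Nat.clog B (b - a), a / B ^ Nat.clog B (b - a))
    ((Finset.range (Nat.clog B (b - a))).biUnion fun j => (fringe B a b (B ^ j)).image (j, ·))

theorem card_candidates_le (B a b : ℕ) :
    (candidates B a b).card ≤ 2 * (B - 1) * Nat.clog B (b - a) + 1 := by
  refine (Finset.card_insert_le _ _).trans (Nat.add_le_add_right ?_ 1)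
  refine (Finset.card_biUnion_le_card_mul _ _ _ fun j _ =>
    Finset.card_image_le.trans (card_fringe_le B a b _)).trans ?_
  rw [Finset.card_range, mul_comm]

theorem mem_candidates_of_maximalCovered (hB : 1 < B) {a b : ℕ} {u : TreeNode B L}
    (hu : u.maximalCovered (Set.Ico a b)) : (u.height, u.idx) ∈ candidates B a b := by
  have hB0 : 0 < B := by omega
  have hsize := pow_height_le_of_covered hB0 hu.1
  rcases lt_or_ge u.height (Nat.clog B (b - a)) with hlt | hge
  · refine Finset.mem_insert_of_mem (Finset.mem_biUnion.2 ⟨u.height, Finset.mem_range.2 hlt, ?_⟩)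
    exact Finset.mem_image_of_mem _ (idx_mem_fringe_of_maximalCovered hB hu)
  · have hclog : b - a ≤ B ^ Nat.clog B (b - a) := Nat.le_pow_clog hB _
    have hheight : u.height = Nat.clog B (b - a) :=
      le_antisymm ((Nat.pow_le_pow_iff_right hB).1 (hsize.trans hclog)) hge
    rw [idx_eq_div_of_covered hB0 hu.1 (hheight ▸ hclog), hheight]
    exact Finset.mem_insert_self _ _

theorem ncard_maximalCovered_Ico_le (hB : 1 < B) (a b : ℕ) :
    {u : TreeNode B L | u.maximalCovered (Set.Ico a b)}.ncard
      ≤ 2 * (B - 1) * Nat.clog B (b - a) + 1 := by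
  refine (Set.ncard_le_ncard_of_injOn _ (fun u hu => mem_candidates_of_maximalCovered hB hu)
    injective_height_idx.injOn (Finset.finite_toSet _)).trans ?_
  rw [Set.ncard_coe_finset]
  exact card_candidates_le B a b

end TreeNode

theorem maximalCovered_count_bound_general
    (B L a b : ℕ) (hB : 2 ≤ B) :
    (2 ≤ b - a →
      {u : TreeNode B L | u.maximalCovered (Set.Ico a b)}.ncard
        ≤ 2 * B * Nat.clog B (b - a)) ∧
    (∀ w : TreeNode B L, w.leafSet = Set.Ico a b →
      {u : TreeNode B L | u.maximalCovered (Set.Ico a b)}.ncard = 1) := by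
  refine ⟨fun hn => ?_, fun w hw => ?_⟩
  · have hk : 0 < Nat.clog B (b - a) := Nat.clog_pos hB hn
    calc _ ≤ 2 * (B - 1) * Nat.clog B (b - a) + 1 := TreeNode.ncard_maximalCovered_Ico_le hB a b
      _ ≤ 2 * B * Nat.clog B (b - a) := by
        obtain ⟨c, rfl⟩ : ∃ c, B = c + 1 := ⟨B - 1, by omega⟩
        rw [Nat.add_sub_cancel]
        nlinarith
  · have hsingleton : {u : TreeNode B L | u.maximalCovered w.leafSet} = {w} :=
      Set.ext fun _ => TreeNode.maximalCovered_leafSet_iff hB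
    rw [← hw, hsingleton, Set.ncard_singleton]

/-- For a lexicographic leaf interval `T = [a,b)`, the number of
maximal covered nodes of `T` is at most `2B·⌈log_B |T|⌉` when `|T| ≥ 2`, and
equals `1` when `T` is the full leaf-set of a single node. -/
theorem maximalCovered_count_bound
    (B L a b : ℕ) (hB : 2 ≤ B) (hb : b ≤ B ^ L) :
    (2 ≤ b - a →
      {u : TreeNode B L | u.maximalCovered (Set.Ico a b)}.ncard
        ≤ 2 * B * Nat.clog B (b - a)) ∧
    (∀ w : TreeNode B L, w.leafSet = Set.Ico a b →
      {u : TreeNode B L | u.maximalCovered (Set.Ico a b)}.ncard = 1) :=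
  maximalCovered_count_bound_general B L a b hB
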